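/- Let l₁, l₂, l₃ be pairwise distinct integers and l̃₁, l̃₂, l̃₃ be integers. If there exists a ℂ-algebra isomorphism from ℂ[x,y]/(x⁴, (y + l̃₁·x)·(y + l̃₂·x)·(y + l̃₃·x)) to ℂ[x,y]/(x⁴, (y + l₁·x)·(y + l₂·x)·(y + l₃·x)) mapping the ℂ-span of the classes of x and y onto the ℂ-span of the classes of x and y, then there exist c ∈ ℂ* and a permutation σ of {1,2,3} such that lᵢ − lⱼ = c·(l̃_{σ(i)} − l̃_{σ(j)}) for all i, j ∈ {1,2,3}. -/
import Mathlib
set_option maxHeartbeats 1000000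


noncomputable section

open MvPolynomial

/-- The relations ideal for `ℂ[x,y]/(x⁴, (y+l₁·x)(y+l₂·x)(y+l₃·x))`. -/
def Crel (l : Fin 3 → ℤ) : Ideal (MvPolynomial (Fin 2) ℂ) :=
  Ideal.span {X 0 ^ 4, ∏ i : Fin 3, (X 1 + (l i : ℂ) • X 0)}

/-- `CR l = ℂ[x,y]/(x⁴, (y+l₁·x)(y+l₂·x)(y+l₃·x))`. -/
abbrev CR (l : Fin 3 → ℤ) := MvPolynomial (Fin 2) ℂ ⧸ Crel l

/-- The class of `x` in `CR l`. -/
def cx (l : Fin 3 → ℤ) : CR l := Ideal.Quotient.mk (Crel l) (X 0)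

/-- The class of `y` in `CR l`. -/
def cy (l : Fin 3 → ℤ) : CR l := Ideal.Quotient.mk (Crel l) (X 1)

/-- The `ℂ`-span of the classes of `x` and `y` (the degree-2 part). -/
def cdeg2 (l : Fin 3 → ℤ) : Submodule ℂ (CR l) := Submodule.span ℂ {cx l, cy l}

/- ## Auxiliary lemmas -/

theorem evalmem (l : Fin 3 → ℤ) (i : Fin 3) (z : MvPolynomial (Fin 2) ℂ) (hz : z ∈ Crel l) :
    (aeval ![(Polynomial.X : Polynomial ℂ), (-(l i):ℂ) • Polynomial.X] z) ∈
      Ideal.span {(Polynomial.X : Polynomial ℂ)^4} := by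
  rw [Crel, Ideal.mem_span_pair] at hz
  obtain ⟨u, v, huv⟩ := hz
  rw [← huv, Ideal.mem_span_singleton]
  have h2 : (aeval ![(Polynomial.X : Polynomial ℂ), (-(l i):ℂ) • Polynomial.X])
      ((∏ j : Fin 3, (X 1 + (l j : ℂ) • X 0) : MvPolynomial (Fin 2) ℂ)) = 0 := by
    rw [map_prod]
    apply Finset.prod_eq_zero (Finset.mem_univ i)
    rw [map_add, map_smul, aeval_X, aeval_X]
    show (-(l i):ℂ) • Polynomial.X + (l i : ℂ) • Polynomial.X = 0
    rw [← add_smul]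
    simp
  rw [map_add, map_mul, map_mul, h2, mul_zero, add_zero, map_pow, aeval_X]
  show _ ∣ _ * (Polynomial.X : Polynomial ℂ) ^ 4
  exact Dvd.intro _ (mul_comm _ _)

theorem coeff_span' (f : Polynomial ℂ) (hf : f ∈ Ideal.span {(Polynomial.X : Polynomial ℂ)^4})
    (k : ℕ) (hk : k < 4) : f.coeff k = 0 := by
  rw [Ideal.mem_span_singleton] at hf
  obtain ⟨g, rfl⟩ := hf
  rw [Polynomial.coeff_X_pow_mul' g 4 k, if_neg (by omega)]

theorem lin (l : Fin 3 → ℤ) (a b : ℂ) (h : C a * X 0 + C b * X 1 ∈ Crel l) (i : Fin 3) :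
    a - b * (l i) = 0 := by
  have h3 := coeff_span' _ (evalmem l i _ h) 1 (by norm_num)
  have e : (aeval ![(Polynomial.X : Polynomial ℂ), (-(l i):ℂ) • Polynomial.X])
      ((C a * X 0 + C b * X 1 : MvPolynomial (Fin 2) ℂ))
      = Polynomial.C (a - b * (l i)) * Polynomial.X := by
    rw [map_add, map_mul, map_mul, aeval_C, aeval_C, aeval_X, aeval_X]
    show Polynomial.C a * Polynomial.X + Polynomial.C b * ((-(l i):ℂ) • Polynomial.X) = _
    rw [Algebra.smul_def]
    show _ + Polynomial.C b * (Polynomial.C (-(l i):ℂ) * _) = _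
    rw [← mul_assoc, ← Polynomial.C_mul, ← add_mul, ← Polynomial.C_add]
    ring_nf
  rw [e] at h3
  simpa using h3

theorem prod3 (l : Fin 3 → ℤ) (m : Fin 3 → ℂ)
    (h : (∏ j : Fin 3, (X 1 + C (m j) * X 0) : MvPolynomial (Fin 2) ℂ) ∈ Crel l) (i : Fin 3) :
    ∏ j : Fin 3, (m j - l i) = 0 := by
  have h3 := coeff_span' _ (evalmem l i _ h) 3 (by norm_num)
  rw [map_prod] at h3
  have e : ∀ j : Fin 3, (aeval ![(Polynomial.X : Polynomial ℂ), (-(l i):ℂ) • Polynomial.X])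
      ((X 1 + C (m j) * X 0 : MvPolynomial (Fin 2) ℂ))
      = Polynomial.C (m j - l i) * Polynomial.X := by
    intro j
    rw [map_add, map_mul, aeval_C, aeval_X, aeval_X]
    show (-(l i):ℂ) • Polynomial.X + Polynomial.C (m j) * Polynomial.X = _
    rw [Algebra.smul_def]
    show Polynomial.C (-(l i):ℂ) * _ + _ = _
    rw [← add_mul, ← Polynomial.C_add]
    ring_nf
  rw [Finset.prod_congr rfl (fun j _ => e j), Finset.prod_mul_distrib, ← map_prod,
    Finset.prod_const] at h3
  rw [Polynomial.coeff_C_mul, Polynomial.coeff_X_pow] at h3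
  simpa using h3

abbrev AP := Polynomial ℂ
abbrev P2 := Polynomial AP

def Φ : MvPolynomial (Fin 2) ℂ →ₐ[ℂ] P2 :=
  aeval ![(Polynomial.X : P2), Polynomial.C (Polynomial.X : AP)]

theorem ΦC (c : ℂ) : Φ (C c) = Polynomial.C (Polynomial.C c) := by rw [Φ, aeval_C]; rfl
theorem ΦX0 : Φ (X 0) = Polynomial.X := by rw [Φ, aeval_X]; rfl
theorem ΦX1 : Φ (X 1) = Polynomial.C Polynomial.X := by rw [Φ, aeval_X]; rfl

theorem hfactor (c : ℂ) : Φ (X 1 + c • X 0) =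
    Polynomial.C Polynomial.X + Polynomial.C (Polynomial.C c) * Polynomial.X := by
  rw [smul_eq_C_mul, map_add, map_mul, ΦC, ΦX0, ΦX1]

local notation "Y" => (Polynomial.X : AP)
local notation "Xo" => (Polynomial.X : P2)
local notation "Co" => (Polynomial.C : AP → P2)
local notation "Ci" => (Polynomial.C : ℂ → AP)

theorem hP (l : Fin 3 → ℤ) : Φ (∏ j : Fin 3, (X 1 + (l j : ℂ) • X 0)) =
    Co (Y^3) + Co (Ci ((l 0 : ℂ) + l 1 + l 2) * Y^2) * Xo^1
    + Co (Ci ((l 0 : ℂ)*l 1 + (l 0 : ℂ)*l 2 + (l 1 : ℂ)*l 2) * Y) * Xo^2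
    + Co (Ci ((l 0 : ℂ)*(l 1)*(l 2))) * Xo^3 := by
  rw [map_prod, Fin.prod_univ_three, hfactor, hfactor, hfactor]
  simp only [map_mul, map_add, map_pow]
  ring

theorem hS (α : ℂ) : Φ ((C α * X 0 + X 1)^4) =
    Co (Y^4) + Co (Ci (4*α) * Y^3) * Xo^1
    + Co (Ci (6*α^2) * Y^2) * Xo^2
    + Co (Ci (4*α^3) * Y) * Xo^3 + Co (Ci (α^4)) * Xo^4 := by
  rw [map_pow, map_add, map_mul, ΦC, ΦX0, ΦX1]
  simp only [map_mul, map_add, map_pow, map_ofNat]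
  ring

theorem quart (l : Fin 3 → ℤ) (α : ℂ)
    (h : (C α * X 0 + X 1)^4 ∈ Crel l) :
    (6*α^2 = ((l 0 : ℂ)*l 1 + (l 0:ℂ)*l 2 + (l 1:ℂ)*l 2)
        + (4*α - ((l 0:ℂ) + l 1 + l 2)) * ((l 0:ℂ) + l 1 + l 2))
    ∧ (4*α^3 = (l 0:ℂ)*l 1*l 2
        + (4*α - ((l 0:ℂ) + l 1 + l 2)) * ((l 0:ℂ)*l 1 + (l 0:ℂ)*l 2 + (l 1:ℂ)*l 2)) := by
  set e1 : ℂ := (l 0 : ℂ) + l 1 + l 2 with he1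
  set e2 : ℂ := (l 0 : ℂ)*l 1 + (l 0:ℂ)*l 2 + (l 1:ℂ)*l 2 with he2
  set e3 : ℂ := (l 0:ℂ)*l 1*l 2 with he3
  rw [Crel, Ideal.mem_span_pair] at h
  obtain ⟨u, v, huv⟩ := h
  have hE := congrArg Φ huv
  rw [map_add, map_mul, map_mul, map_pow, ΦX0, hP, hS] at hE
  set U := Φ u with hU
  set V := Φ v with hV
  have hE2 : U * Xo^4 + ((V * Co (Y^3)) + (V * Co (Ci e1 * Y^2)) * Xo^1
      + (V * Co (Ci e2 * Y)) * Xo^2 + (V * Co (Ci e3)) * Xo^3)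
      = Co (Y^4) + Co (Ci (4*α) * Y^3) * Xo^1 + Co (Ci (6*α^2) * Y^2) * Xo^2
      + Co (Ci (4*α^3) * Y) * Xo^3 + Co (Ci (α^4)) * Xo^4 := by
    linear_combination hE
  have c0 := congrArg (fun p => Polynomial.coeff p 0) hE2
  have c1 := congrArg (fun p => Polynomial.coeff p 1) hE2
  have c2 := congrArg (fun p => Polynomial.coeff p 2) hE2
  have c3 := congrArg (fun p => Polynomial.coeff p 3) hE2
  simp only [Polynomial.coeff_add, Polynomial.coeff_mul_X_pow', Polynomial.coeff_mul_C,
    Polynomial.coeff_C] at c0 c1 c2 c3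
  norm_num at c0 c1 c2 c3
  try simp only [map_ofNat] at c1
  try simp only [map_ofNat] at c2
  try simp only [map_ofNat] at c3
  have pow3 : (Polynomial.X : AP)^3 ≠ 0 := pow_ne_zero 3 Polynomial.X_ne_zero
  have hV0 : V.coeff 0 = Polynomial.X := mul_right_cancel₀ pow3 (by linear_combination c0)
  set μA : AP := 4 * Polynomial.C α - Polynomial.C e1 with hμA
  have hV1 : V.coeff 1 = μA :=
    mul_right_cancel₀ pow3 (by linear_combination c1 - (Polynomial.C e1 * Polynomial.X^2) * hV0)
  set wA : AP := 6 * (Polynomial.C α)^2 - μA * Polynomial.C e1 - Polynomial.C e2 with hwA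
  have h2 : (V.coeff 2 * Polynomial.X) * Polynomial.X^2 = wA * Polynomial.X^2 := by
    linear_combination c2 - (Polynomial.C e1 * Polynomial.X^2) * hV1
      - (Polynomial.C e2 * Polynomial.X) * hV0
  have h2' : V.coeff 2 * Polynomial.X = wA :=
    mul_right_cancel₀ (pow_ne_zero 2 Polynomial.X_ne_zero) h2
  have hwA' : wA = Polynomial.C (6*α^2 - (4*α - e1)*e1 - e2) := by
    rw [hwA, hμA]; simp only [map_sub, map_mul, map_pow, map_ofNat]; try ring
  have R2 : 6*α^2 - (4*α - e1)*e1 - e2 = 0 := by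
    have := congrArg (fun p => Polynomial.coeff p 0) h2'
    simp only [hwA', Polynomial.mul_coeff_zero, Polynomial.coeff_X_zero, mul_zero,
      Polynomial.coeff_C] at this
    simpa using this.symm
  have hV2 : V.coeff 2 = 0 := by
    have : V.coeff 2 * Polynomial.X = 0 := by rw [h2', hwA', R2, map_zero]
    rcases mul_eq_zero.mp this with h | h
    · exact h
    · exact absurd h Polynomial.X_ne_zero
  set wA' : AP := 4 * (Polynomial.C α)^3 - μA * Polynomial.C e2 - Polynomial.C e3 with hwA'2
  have h3 : (V.coeff 3 * Polynomial.X^2) * Polynomial.X = wA' * Polynomial.X := by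
    linear_combination c3 - (Polynomial.C e1 * Polynomial.X^2) * hV2
      - (Polynomial.C e2 * Polynomial.X) * hV1 - Polynomial.C e3 * hV0
  have h3' : V.coeff 3 * Polynomial.X^2 = wA' :=
    mul_right_cancel₀ Polynomial.X_ne_zero h3
  have hwA'' : wA' = Polynomial.C (4*α^3 - (4*α - e1)*e2 - e3) := by
    rw [hwA'2, hμA]; simp only [map_sub, map_mul, map_pow, map_ofNat]; try ring
  have R3 : 4*α^3 - (4*α - e1)*e2 - e3 = 0 := by
    have := congrArg (fun p => Polynomial.coeff p 0) h3'
    simp only [hwA'', Polynomial.mul_coeff_zero, Polynomial.coeff_C] at this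
    simp only [Polynomial.coeff_X_pow] at this
    norm_num at this
    simpa using this.symm
  constructor
  · linear_combination R2
  · linear_combination R3

theorem pairsplit (x y : ℂ) (h : x^4 = y^4) (hne : x ≠ y) : x + y = 0 ∨ x^2 + y^2 = 0 := by
  have h0 : (x - y) * ((x + y) * (x^2 + y^2)) = 0 := by linear_combination h
  rcases mul_eq_zero.mp h0 with h1 | h1
  · exact absurd (sub_eq_zero.mp h1) hne
  · exact mul_eq_zero.mp h1

theorem nilc (l : Fin 3 → ℤ) (hl : Function.Injective l) (α : ℂ)
    (R2 : 6*α^2 = ((l 0 : ℂ)*l 1 + (l 0:ℂ)*l 2 + (l 1:ℂ)*l 2)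
        + (4*α - ((l 0:ℂ) + l 1 + l 2)) * ((l 0:ℂ) + l 1 + l 2))
    (R3 : 4*α^3 = (l 0:ℂ)*l 1*l 2
        + (4*α - ((l 0:ℂ) + l 1 + l 2)) * ((l 0:ℂ)*l 1 + (l 0:ℂ)*l 2 + (l 1:ℂ)*l 2)) :
    False := by
  have hC : ∀ i j : Fin 3, i ≠ j → (l i : ℂ) ≠ (l j : ℂ) := by
    intro i j hij h
    exact hij (hl (by exact_mod_cast h))
  have q0 : (α - l 0)^4 = α^4 - (4*α - ((l 0:ℂ) + l 1 + l 2)) * ((l 0:ℂ)*l 1*l 2) := by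
    linear_combination (l 0:ℂ)^2 * R2 - (l 0:ℂ) * R3
  have q1 : (α - l 1)^4 = α^4 - (4*α - ((l 0:ℂ) + l 1 + l 2)) * ((l 0:ℂ)*l 1*l 2) := by
    linear_combination (l 1:ℂ)^2 * R2 - (l 1:ℂ) * R3
  have q2 : (α - l 2)^4 = α^4 - (4*α - ((l 0:ℂ) + l 1 + l 2)) * ((l 0:ℂ)*l 1*l 2) := by
    linear_combination (l 2:ℂ)^2 * R2 - (l 2:ℂ) * R3
  have hne : ∀ i j : Fin 3, i ≠ j → (α - l i) ≠ (α - l j) := by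
    intro i j hij h
    exact hC i j hij (by linear_combination -h)
  have D01 := pairsplit _ _ (q0.trans q1.symm) (hne 0 1 (by decide))
  have D02 := pairsplit _ _ (q0.trans q2.symm) (hne 0 2 (by decide))
  have D12 := pairsplit _ _ (q1.trans q2.symm) (hne 1 2 (by decide))
  rcases D01 with S01 | I01
  · rcases D02 with S02 | I02
    · have : (l 1 : ℂ) = l 2 := by linear_combination S02 - S01
      exact hC 1 2 (by decide) this
    · have key : (((l 1 - l 0 : ℤ)) : ℂ)^2 + (((l 0 + l 1 - 2*l 2 : ℤ)) : ℂ)^2 = 0 := by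
        push_cast
        linear_combination 4*I02 + (-4*α + 2*(l 0:ℂ) - 2*(l 1:ℂ) + 4*(l 2:ℂ)) * S01
      have keyZ : (l 1 - l 0)^2 + (l 0 + l 1 - 2*l 2)^2 = (0:ℤ) := by exact_mod_cast key
      have : l 1 = l 0 := by nlinarith [sq_nonneg (l 1 - l 0), sq_nonneg (l 0 + l 1 - 2*l 2)]
      exact absurd (hl this) (by decide)
  · rcases D02 with S02 | I02
    · have key : (((l 2 - l 0 : ℤ)) : ℂ)^2 + (((l 0 + l 2 - 2*l 1 : ℤ)) : ℂ)^2 = 0 := by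
        push_cast
        linear_combination 4*I01 + (-4*α + 2*(l 0:ℂ) - 2*(l 2:ℂ) + 4*(l 1:ℂ)) * S02
      have keyZ : (l 2 - l 0)^2 + (l 0 + l 2 - 2*l 1)^2 = (0:ℤ) := by exact_mod_cast key
      have : l 2 = l 0 := by nlinarith [sq_nonneg (l 2 - l 0), sq_nonneg (l 0 + l 2 - 2*l 1)]
      exact absurd (hl this) (by decide)
    · rcases D12 with S12 | I12
      · have key : (((l 1 + l 2 - 2*l 0 : ℤ)) : ℂ)^2 + (((l 2 - l 1 : ℤ)) : ℂ)^2 = 0 := by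
          push_cast
          linear_combination 4*I01 + (-4*α + 4*(l 0:ℂ) + 2*(l 1:ℂ) - 2*(l 2:ℂ)) * S12
        have keyZ : (l 1 + l 2 - 2*l 0)^2 + (l 2 - l 1)^2 = (0:ℤ) := by exact_mod_cast key
        have : l 2 = l 1 := by nlinarith [sq_nonneg (l 2 - l 1), sq_nonneg (l 1 + l 2 - 2*l 0)]
        exact absurd (hl this) (by decide)
      · have h0 : (α - l 0)^2 = 0 := by linear_combination (I01 + I02 - I12)/2
        have hα : α = (l 0 : ℂ) := by
          have := pow_eq_zero_iff (n := 2) (by norm_num) |>.mp h0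
          linear_combination this
        have key : (((l 0 - l 1 : ℤ)) : ℂ)^2 + (((l 0 - l 2 : ℤ)) : ℂ)^2 = 0 := by
          push_cast
          linear_combination I12 + (-2*α - 2*(l 0:ℂ) + 2*(l 1:ℂ) + 2*(l 2:ℂ)) * hα
        have keyZ : (l 0 - l 1)^2 + (l 0 - l 2)^2 = (0:ℤ) := by exact_mod_cast key
        have : l 0 = l 1 := by nlinarith [sq_nonneg (l 0 - l 1), sq_nonneg (l 0 - l 2)]
        exact absurd (hl this) (by decide)

theorem mk_smul (l : Fin 3 → ℤ) (a : ℂ) (z : MvPolynomial (Fin 2) ℂ) :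
    a • Ideal.Quotient.mk (Crel l) z = Ideal.Quotient.mk (Crel l) (C a * z) := by
  rw [← smul_eq_C_mul, ← Ideal.Quotient.mkₐ_eq_mk ℂ, map_smul]

/-- Let `l₁, l₂, l₃` be pairwise distinct integers and `l̃₁, l̃₂, l̃₃`
integers. If there is a `ℂ`-algebra isomorphism between the associated rings mapping
the span of `x, y` onto the span of `x, y`, then there are `c ∈ ℂ*` and a permutation
`σ` of `{1,2,3}` such that `lᵢ − lⱼ = c·(l̃_{σ(i)} − l̃_{σ(j)})` for all `i, j`. -/
theorem stmt13 (l lt : Fin 3 → ℤ) (hl : Function.Injective l)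
    (hiso : ∃ φ : CR lt ≃ₐ[ℂ] CR l,
      Submodule.map φ.toLinearMap (cdeg2 lt) = cdeg2 l) :
    ∃ c : ℂ, c ≠ 0 ∧ ∃ σ : Equiv.Perm (Fin 3),
      ∀ i j : Fin 3, (l i : ℂ) - (l j : ℂ) = c * ((lt (σ i) : ℂ) - (lt (σ j) : ℂ)) := by
  obtain ⟨φ, hφ⟩ := hiso
  have hxmem : φ (cx lt) ∈ cdeg2 l := by
    rw [← hφ]
    exact Submodule.mem_map_of_mem (Submodule.subset_span (Set.mem_insert _ _))
  have hymem : φ (cy lt) ∈ cdeg2 l := by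
    rw [← hφ]
    exact Submodule.mem_map_of_mem (Submodule.subset_span
      (Set.mem_insert_of_mem _ rfl))
  rw [cdeg2, Submodule.mem_span_pair] at hxmem hymem
  obtain ⟨a, b, hab⟩ := hxmem
  obtain ⟨c, d, hcd⟩ := hymem
  -- x̃⁴ = 0
  have hx4 : (cx lt)^4 = (0 : CR lt) := by
    rw [cx, ← map_pow, Ideal.Quotient.eq_zero_iff_mem]
    exact Ideal.subset_span (Set.mem_insert _ _)
  -- b = 0
  have hb0 : b = 0 := by
    by_contra hb
    have h40 : Ideal.Quotient.mk (Crel l) ((C a * X 0 + C b * X 1)^4) = 0 := by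
      rw [map_pow, map_add, ← mk_smul, ← mk_smul]
      show (a • cx l + b • cy l)^4 = 0
      rw [hab, ← map_pow, hx4, map_zero]
    rw [Ideal.Quotient.eq_zero_iff_mem] at h40
    have hmem : (C (a/b) * X 0 + X 1)^4 ∈ Crel l := by
      have h := Ideal.mul_mem_left (Crel l) (C (b⁻¹)^4) h40
      have e : C (b⁻¹:ℂ)^4 * (C a * X 0 + C b * X 1)^4
          = ((C (a/b) * X 0 + X 1 : MvPolynomial (Fin 2) ℂ))^4 := by
        rw [← mul_pow]
        congr 1
        rw [mul_add, ← mul_assoc, ← mul_assoc, ← C_mul, ← C_mul, inv_mul_cancel₀ hb, C_1,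
          one_mul, mul_comm b⁻¹ a, ← div_eq_mul_inv]
      exact Eq.mp (congrArg (· ∈ Crel l) e) h
    obtain ⟨hR2, hR3⟩ := quart l (a/b) hmem
    exact nilc l hl (a/b) hR2 hR3
  -- a ≠ 0
  have ha0 : a ≠ 0 := by
    intro ha
    have h1 : φ (cx lt) = 0 := by rw [← hab, ha, hb0]; simp
    have h2 : cx lt = 0 := by
      apply φ.injective
      rw [h1, map_zero]
    rw [cx, Ideal.Quotient.eq_zero_iff_mem] at h2
    have h3 : C (1:ℂ) * X 0 + C (0:ℂ) * X 1 ∈ Crel lt := by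
      simpa using h2
    have := lin lt 1 0 h3 0
    simp at this
  -- d ≠ 0
  have hd0 : d ≠ 0 := by
    intro hd
    have himage : cdeg2 l = Submodule.span ℂ {φ (cx lt), φ (cy lt)} := by
      rw [← hφ, cdeg2, Submodule.map_span, Set.image_insert_eq, Set.image_singleton]
      rfl
    have hcyl : cy l ∈ Submodule.span ℂ {φ (cx lt), φ (cy lt)} := by
      rw [← himage]
      exact Submodule.subset_span (Set.mem_insert_of_mem _ rfl)
    have hsub : Submodule.span ℂ {φ (cx lt), φ (cy lt)} ≤ Submodule.span ℂ {cx l} := by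
      rw [Submodule.span_le]
      rintro z (rfl | rfl)
      · rw [← hab, hb0]
        simp only [zero_smul, add_zero]
        exact Submodule.smul_mem _ _ (Submodule.mem_span_singleton_self _)
      · rw [← hcd, hd]
        simp only [zero_smul, add_zero]
        exact Submodule.smul_mem _ _ (Submodule.mem_span_singleton_self _)
    obtain ⟨t, ht⟩ := Submodule.mem_span_singleton.mp (hsub hcyl)
    have hmem : C t * X 0 + C (-1:ℂ) * X 1 ∈ Crel l := by
      rw [← Ideal.Quotient.eq_zero_iff_mem, map_add, ← mk_smul, ← mk_smul]
      show t • cx l + (-1:ℂ) • cy l = 0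
      rw [← ht]
      module
    have h0 := lin l t (-1) hmem 0
    have h1 := lin l t (-1) hmem 1
    have : (l 0 : ℂ) = l 1 := by linear_combination h0 - h1
    exact absurd (hl (by exact_mod_cast this)) (by decide)
  -- the cubic relation
  set m : Fin 3 → ℂ := fun i => (c + lt i * a)/d with hm
  have hrel : Ideal.Quotient.mk (Crel lt) (∏ i : Fin 3, (X 1 + (lt i : ℂ) • X 0)) = 0 := by
    rw [Ideal.Quotient.eq_zero_iff_mem]
    exact Ideal.subset_span (Set.mem_insert_of_mem _ rfl)
  have hrel2 : (∏ i : Fin 3, (cy lt + (lt i : ℂ) • cx lt)) = (0 : CR lt) := by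
    rw [← hrel, map_prod]
    apply Finset.prod_congr rfl
    intro i _
    rw [map_add, cy, cx, mk_smul, smul_eq_C_mul]
  have hrel3 : (∏ i : Fin 3, (φ (cy lt) + (lt i : ℂ) • φ (cx lt))) = (0 : CR l) := by
    rw [← map_zero φ, ← hrel2, map_prod]
    apply Finset.prod_congr rfl
    intro i _
    rw [map_add, map_smul]
  have hrel4 : Ideal.Quotient.mk (Crel l)
      (∏ i : Fin 3, (C (c + lt i * a) * X 0 + C d * X 1)) = 0 := by
    rw [map_prod, ← hrel3]
    apply Finset.prod_congr rfl
    intro i _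
    rw [map_add, ← mk_smul, ← mk_smul]
    show (c + lt i * a) • cx l + d • cy l = _
    rw [← hab, ← hcd, hb0]
    module
  rw [Ideal.Quotient.eq_zero_iff_mem] at hrel4
  have hmem3 : (∏ j : Fin 3, (X 1 + C (m j) * X 0) : MvPolynomial (Fin 2) ℂ) ∈ Crel l := by
    have h := Ideal.mul_mem_left (Crel l) (C (d⁻¹)^3) hrel4
    have f : ∀ i : Fin 3, C (d⁻¹:ℂ) * (C (c + lt i * a) * X 0 + C d * X 1)
        = (X 1 + C (m i) * X 0 : MvPolynomial (Fin 2) ℂ) := by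
      intro i
      rw [mul_add, ← mul_assoc, ← mul_assoc, ← C_mul, ← C_mul, inv_mul_cancel₀ hd0, C_1,
        one_mul, hm]
      rw [mul_comm (d⁻¹) (c + lt i * a), ← div_eq_mul_inv]
      ring
    have e : C (d⁻¹:ℂ)^3 * (∏ i : Fin 3, (C (c + lt i * a) * X 0 + C d * X 1))
        = ∏ j : Fin 3, (X 1 + C (m j) * X 0 : MvPolynomial (Fin 2) ℂ) := by
      rw [Fin.prod_univ_three, Fin.prod_univ_three, ← f 0, ← f 1, ← f 2]
      ring
    exact Eq.mp (congrArg (· ∈ Crel l) e) h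
  have hzero : ∀ i : Fin 3, ∃ j : Fin 3, m j = (l i : ℂ) := by
    intro i
    have := prod3 l m hmem3 i
    obtain ⟨j, _, hj⟩ := Finset.prod_eq_zero_iff.mp this
    exact ⟨j, sub_eq_zero.mp hj⟩
  choose σ0 hσ0 using hzero
  have hinj : Function.Injective σ0 := by
    intro i1 i2 h12
    have : (l i1 : ℂ) = l i2 := by rw [← hσ0 i1, ← hσ0 i2, h12]
    exact hl (by exact_mod_cast this)
  have hbij : Function.Bijective σ0 := Finite.injective_iff_bijective.mp hinj
  refine ⟨a/d, div_ne_zero ha0 hd0, Equiv.ofBijective σ0 hbij, ?_⟩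
  intro i j
  have hi := hσ0 i
  have hj := hσ0 j
  show (l i : ℂ) - l j = a/d * ((lt (σ0 i) : ℂ) - (lt (σ0 j) : ℂ))
  rw [← hi, ← hj, hm]
  field_simp
  ring
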